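/- Let κ be a positive integer, let t₁, t₂ be real numbers, let x₁, x₂ ≥ 2, and for j = 1, 2 let f_j : ℕ → ℂ satisfy |f_j(n)| ≤ τ(n)^κ for all n ≥ 1. Then D_{2κ}(f₁ f₂, n^{i(t₁+t₂)}; min{x₁, x₂})² ≤ 2^{κ+2} · max{ D_κ(f₁, n^{it₁}; x₁)², D_κ(f₂, n^{it₂}; x₂)² }, where f₁ f₂ denotes the pointwise product n ↦ f₁(n) f₂(n). -/

import Mathlib

open Complex Finset

/-- `dnum n` is the number of positive divisors of `n`, i.e. `τ(n)`. -/
def dnum (n : ℕ) : ℕ := n.divisors.card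

/-- Square of the distance `D_m(f, n^{it}; x)`:
`∑_{p ≤ x, p prime} (2^m − Re(f(p) p^{−it}))/p`. -/
noncomputable def Dsq (m : ℕ) (f : ℕ → ℂ) (t : ℝ) (x : ℝ) : ℝ :=
  ∑ p ∈ (Finset.Icc 1 ⌊x⌋₊).filter Nat.Prime,
    ((2 : ℝ) ^ m - (f p * (p : ℂ) ^ (-(I * (t : ℂ)))).re) / p

/-! At a prime `p`, put `zⱼ = fⱼ(p) p^{-itⱼ}`, so `|zⱼ| ≤ 2^κ` since `τ(p) = 2`. The elementary
inequality `M² - Re(z₁z₂) ≤ 2M((M - Re z₁) + (M - Re z₂))` for `|z₁|, |z₂| ≤ M` bounds the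
summand of the product's distance by `2^{κ+1}` times the sum of the two summands. Summing over
`p ≤ min(x₁, x₂)` and then enlarging each range to `p ≤ xⱼ`, which is allowed because all
summands are nonnegative, gives the claim. -/

lemma sq_sub_re_mul_le {M : ℝ} {z₁ z₂ : ℂ} (h₁ : ‖z₁‖ ≤ M) (h₂ : ‖z₂‖ ≤ M) :
    M ^ 2 - (z₁ * z₂).re ≤ 2 * M * ((M - z₁.re) + (M - z₂.re)) := by
  have normSq_le {z : ℂ} (h : ‖z‖ ≤ M) : z.re * z.re + z.im * z.im ≤ M ^ 2 := by
    rw [← Complex.normSq_apply, ← Complex.sq_norm]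
    exact pow_le_pow_left₀ (norm_nonneg _) h 2
  have hM : 0 ≤ M := (norm_nonneg _).trans h₁
  rw [Complex.mul_re]
  nlinarith [normSq_le h₁, normSq_le h₂, sq_nonneg (z₁.im - z₂.im),
    sq_nonneg (z₁.re + z₂.re - 2 * M)]

lemma dnum_of_prime {p : ℕ} (hp : p.Prime) : dnum p = 2 := by
  rw [dnum, Nat.Prime.divisors hp, card_pair hp.one_lt.ne]

lemma norm_le_two_pow_of_prime {κ : ℕ} {f : ℕ → ℂ}
    (hf : ∀ n : ℕ, 1 ≤ n → ‖f n‖ ≤ (dnum n : ℝ) ^ κ) {p : ℕ} (hp : p.Prime) :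
    ‖f p‖ ≤ 2 ^ κ := by
  simpa [dnum_of_prime hp] using hf p hp.one_lt.le

lemma norm_natCast_cpow_neg_I_mul {n : ℕ} (hn : 0 < n) (t : ℝ) :
    ‖(n : ℂ) ^ (-(I * (t : ℂ)))‖ = 1 := by
  simp [norm_natCast_cpow_of_pos hn]

lemma natCast_cpow_neg_I_mul_add {n : ℕ} (hn : 0 < n) (t₁ t₂ : ℝ) :
    (n : ℂ) ^ (-(I * ((t₁ + t₂ : ℝ) : ℂ))) =
      (n : ℂ) ^ (-(I * (t₁ : ℂ))) * (n : ℂ) ^ (-(I * (t₂ : ℂ))) := by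
  rw [← cpow_add _ _ (Nat.cast_ne_zero.mpr hn.ne')]
  push_cast
  ring_nf

section Dsq

variable {m : ℕ} {f f₁ f₂ : ℕ → ℂ}

lemma norm_mul_cpow_le_of_prime (hf : ∀ p : ℕ, p.Prime → ‖f p‖ ≤ 2 ^ m) (t : ℝ) {p : ℕ}
    (hp : p.Prime) : ‖f p * (p : ℂ) ^ (-(I * (t : ℂ)))‖ ≤ 2 ^ m := by
  rw [norm_mul, norm_natCast_cpow_neg_I_mul hp.pos, mul_one]
  exact hf p hp

lemma Dsq_mono (hf : ∀ p : ℕ, p.Prime → ‖f p‖ ≤ 2 ^ m) (t : ℝ) {x y : ℝ} (hxy : x ≤ y) :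
    Dsq m f t x ≤ Dsq m f t y := by
  refine sum_le_sum_of_subset_of_nonneg
    (filter_subset_filter _ (Icc_subset_Icc le_rfl (Nat.floor_le_floor hxy))) ?_
  intro p hp _
  have hpp := (mem_filter.mp hp).2
  refine div_nonneg (sub_nonneg.mpr ?_) (Nat.cast_nonneg p)
  exact (re_le_norm _).trans (norm_mul_cpow_le_of_prime hf t hpp)

lemma Dsq_mul_le (hf₁ : ∀ p : ℕ, p.Prime → ‖f₁ p‖ ≤ 2 ^ m)
    (hf₂ : ∀ p : ℕ, p.Prime → ‖f₂ p‖ ≤ 2 ^ m) (t₁ t₂ x : ℝ) :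
    Dsq (2 * m) (fun n => f₁ n * f₂ n) (t₁ + t₂) x ≤
      2 ^ (m + 1) * (Dsq m f₁ t₁ x + Dsq m f₂ t₂ x) := by
  rw [Dsq, Dsq, Dsq, ← sum_add_distrib, mul_sum]
  refine sum_le_sum fun p hp => ?_
  have hpp := (mem_filter.mp hp).2
  have hsplit : f₁ p * f₂ p * (p : ℂ) ^ (-(I * ((t₁ + t₂ : ℝ) : ℂ))) =
      (f₁ p * (p : ℂ) ^ (-(I * (t₁ : ℂ)))) * (f₂ p * (p : ℂ) ^ (-(I * (t₂ : ℂ)))) := by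
    rw [natCast_cpow_neg_I_mul_add hpp.pos]
    ring
  have key := sq_sub_re_mul_le (norm_mul_cpow_le_of_prime hf₁ t₁ hpp)
    (norm_mul_cpow_le_of_prime hf₂ t₂ hpp)
  have hsq : (2 : ℝ) ^ (2 * m) = (2 ^ m) ^ 2 := by ring
  have hsucc : (2 : ℝ) ^ (m + 1) = 2 * 2 ^ m := by ring
  rw [hsplit, hsq, hsucc, ← add_div, ← mul_div_assoc]
  gcongr

end Dsq

theorem stmt13_general (κ : ℕ) (t₁ t₂ x₁ x₂ : ℝ)
    (f₁ f₂ : ℕ → ℂ)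
    (hf₁ : ∀ n : ℕ, 1 ≤ n → ‖f₁ n‖ ≤ (dnum n : ℝ) ^ κ)
    (hf₂ : ∀ n : ℕ, 1 ≤ n → ‖f₂ n‖ ≤ (dnum n : ℝ) ^ κ) :
    Dsq (2 * κ) (fun n => f₁ n * f₂ n) (t₁ + t₂) (min x₁ x₂) ≤
      (2 : ℝ) ^ (κ + 2) * max (Dsq κ f₁ t₁ x₁) (Dsq κ f₂ t₂ x₂) := by
  have hp₁ := fun (p : ℕ) (hp : p.Prime) => norm_le_two_pow_of_prime hf₁ hp
  have hp₂ := fun (p : ℕ) (hp : p.Prime) => norm_le_two_pow_of_prime hf₂ hp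
  have h₁ : Dsq κ f₁ t₁ (min x₁ x₂) ≤ max (Dsq κ f₁ t₁ x₁) (Dsq κ f₂ t₂ x₂) :=
    (Dsq_mono hp₁ t₁ (min_le_left _ _)).trans (le_max_left _ _)
  have h₂ : Dsq κ f₂ t₂ (min x₁ x₂) ≤ max (Dsq κ f₁ t₁ x₁) (Dsq κ f₂ t₂ x₂) :=
    (Dsq_mono hp₂ t₂ (min_le_right _ _)).trans (le_max_right _ _)
  calc Dsq (2 * κ) (fun n => f₁ n * f₂ n) (t₁ + t₂) (min x₁ x₂)
      ≤ 2 ^ (κ + 1) * (Dsq κ f₁ t₁ (min x₁ x₂) + Dsq κ f₂ t₂ (min x₁ x₂)) :=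
        Dsq_mul_le hp₁ hp₂ t₁ t₂ _
    _ ≤ 2 ^ (κ + 1) * (2 * max (Dsq κ f₁ t₁ x₁) (Dsq κ f₂ t₂ x₂)) := by gcongr; linarith
    _ = 2 ^ (κ + 2) * max (Dsq κ f₁ t₁ x₁) (Dsq κ f₂ t₂ x₂) := by ring

theorem stmt13 (κ : ℕ) (hκ : 0 < κ) (t₁ t₂ x₁ x₂ : ℝ) (hx₁ : 2 ≤ x₁) (hx₂ : 2 ≤ x₂)
    (f₁ f₂ : ℕ → ℂ)
    (hf₁ : ∀ n : ℕ, 1 ≤ n → ‖f₁ n‖ ≤ (dnum n : ℝ) ^ κ)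
    (hf₂ : ∀ n : ℕ, 1 ≤ n → ‖f₂ n‖ ≤ (dnum n : ℝ) ^ κ) :
    Dsq (2 * κ) (fun n => f₁ n * f₂ n) (t₁ + t₂) (min x₁ x₂) ≤
      (2 : ℝ) ^ (κ + 2) * max (Dsq κ f₁ t₁ x₁) (Dsq κ f₂ t₂ x₂) :=
  stmt13_general κ t₁ t₂ x₁ x₂ f₁ f₂ hf₁ hf₂
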